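/- Let M be an n×n matrix over 𝔽₂ with zero diagonal and let p, p' be distinct standard basis vectors with ⟨Mp, p'⟩ = ⟨Mp', p⟩ = 0. Suppose A ∈ 𝔽₂ⁿ satisfies ⟨Mx, Mᵀy⟩ = ⟨Mx, y⟩(1 + ⟨A, x + y⟩) for all standard basis vectors x, y, and ⟨A, p'⟩ = 0. For a standard basis vector u ≠ p' with ⟨Mu, p'⟩ = 0, setting P(u) = ⟨Mu, p⟩((Mp + p') + ⟨u, Mp⟩u), we have ⟨Mu + P(u), Mᵀp⟩ = ⟨Mu + P(u), p'⟩·(1 + ⟨A + S(M)p + ⟨A, p⟩p', u + p'⟩). -/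
import Mathlib

open Matrix

/-- Standard basis vector over the field with two elements. -/
def e {n : ℕ} (i : Fin n) : Fin n → ZMod 2 := Pi.single i 1

/-- `SM M` is the matrix with `⟨SM M x, y⟩ = ⟨M x, y⟩ * ⟨M y, x⟩` on standard basis vectors. -/
def SM {n : ℕ} (M : Matrix (Fin n) (Fin n) (ZMod 2)) : Matrix (Fin n) (Fin n) (ZMod 2) :=
  Matrix.of fun i j => (M.mulVec (e j) ⬝ᵥ e i) * (M.mulVec (e i) ⬝ᵥ e j)

/-- `P M p p' u = ⟨M u, p⟩ • ((M p + p') + ⟨u, M p⟩ • u)` on standard basis vectors. -/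
def P {n : ℕ} (M : Matrix (Fin n) (Fin n) (ZMod 2)) (p p' u : Fin n) : Fin n → ZMod 2 :=
  (M.mulVec (e u) ⬝ᵥ e p) • ((M.mulVec (e p) + e p') + (e u ⬝ᵥ M.mulVec (e p)) • e u)

/-- `PT M p p' u` is `P` formed with the transpose of `M`. -/
def PT {n : ℕ} (M : Matrix (Fin n) (Fin n) (ZMod 2)) (p p' u : Fin n) : Fin n → ZMod 2 :=
  (Mᵀ.mulVec (e u) ⬝ᵥ e p) • ((Mᵀ.mulVec (e p) + e p') + (e u ⬝ᵥ Mᵀ.mulVec (e p)) • e u)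

lemma me_dot {n : ℕ} (M : Matrix (Fin n) (Fin n) (ZMod 2)) (i j : Fin n) :
    M.mulVec (e i) ⬝ᵥ e j = M j i := by
  simp [e, mulVec_single, dotProduct, Pi.single_apply]

lemma e_dot {n : ℕ} (v : Fin n → ZMod 2) (i : Fin n) : e i ⬝ᵥ v = v i := by
  simp [e, dotProduct, Pi.single_apply]

lemma dot_e {n : ℕ} (v : Fin n → ZMod 2) (i : Fin n) : v ⬝ᵥ e i = v i := by
  simp [e, dotProduct, Pi.single_apply]

lemma mulVec_e_apply {n : ℕ} (M : Matrix (Fin n) (Fin n) (ZMod 2)) (i j : Fin n) :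
    M.mulVec (e i) j = M j i := by
  simp [e, mulVec_single]

theorem stmt_7 {n : ℕ} (M : Matrix (Fin n) (Fin n) (ZMod 2))
    (hdiag : ∀ q : Fin n, M.mulVec (e q) ⬝ᵥ e q = 0)
    (p p' : Fin n) (hpp' : p ≠ p')
    (h1 : M.mulVec (e p) ⬝ᵥ e p' = 0) (h2 : M.mulVec (e p') ⬝ᵥ e p = 0)
    (A : Fin n → ZMod 2)
    (hA : ∀ x y : Fin n, M.mulVec (e x) ⬝ᵥ Mᵀ.mulVec (e y) =
      (M.mulVec (e x) ⬝ᵥ e y) * (1 + A ⬝ᵥ (e x + e y)))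
    (hAp' : A ⬝ᵥ e p' = 0)
    (u : Fin n) (hu : u ≠ p') (hup' : M.mulVec (e u) ⬝ᵥ e p' = 0) :
    (M.mulVec (e u) + P M p p' u) ⬝ᵥ Mᵀ.mulVec (e p) =
      ((M.mulVec (e u) + P M p p' u) ⬝ᵥ e p') *
        (1 + (A + (SM M).mulVec (e p) + (A ⬝ᵥ e p) • e p') ⬝ᵥ (e u + e p')) := by
  have hMpp : M p p = 0 := by have := hdiag p; rwa [me_dot] at this
  have hMpp' : M p p' = 0 := by rwa [me_dot] at h2
  have hMp'p : M p' p = 0 := by rwa [me_dot] at h1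
  have hMp'u : M p' u = 0 := by rwa [me_dot] at hup'
  have hAp'0 : A p' = 0 := by rwa [dot_e] at hAp'
  have hep'u : e p' u = 0 := by simp [e, Pi.single_apply, hu]
  have hep'p' : (e p' : Fin n → ZMod 2) p' = 1 := by simp [e]
  have heup' : (e u : Fin n → ZMod 2) p' = 0 := by
    simp [e, Pi.single_apply, Ne.symm hu]
  simp only [P, SM, add_dotProduct, dotProduct_add, smul_dotProduct, dotProduct_smul,
    smul_eq_mul, hA, me_dot, e_dot, dot_e, mulVec_e_apply, of_apply, transpose_apply,
    Pi.add_apply, Pi.smul_apply, hMpp, hMpp', hMp'p, hMp'u, hAp'0, hep'u, hep'p', heup']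
  ring
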